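/- arXiv:2006.10215 — 4 statements merged into one kernel-verified Lean document; each statement's English description precedes it below -/
import Mathlib

section
/- For even M and real s, the sum of the elements of the Huffman sequence H^N(s) (with N = 2M+3) equals F_{M+2}(s) + F_M(s). That is, the zero-frequency Fourier coefficient of H^N(s) is F_{M+2}(s) + F_M(s). -/
/-!
On each of the two Fibonacci blocks the identity `s F_k = F_{k+1} - F_{k-1}` makes the sum
telescope, to `2 (F_{M+1} + F_M - F_1 - F_0)` and `2 (F_0 + F_{-1} - F_{-M} - F_{-M-1})`.
Since `F_{-n} = (-1)^(n+1) F_n` and `M` is even, the second block is `2 (1 + F_M - F_{M+1})`,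
and together with the three isolated entries everything collapses to
`s F_{M+1} + 2 F_M = F_{M+2} + F_M`.
-/

open Finset

theorem Finset.sum_Ioc_add_sum_Ioc {α M : Type*} [LinearOrder α] [LocallyFiniteOrder α]
    [AddCommMonoid M] (f : α → M) {a b c : α} (hab : a ≤ b) (hbc : b ≤ c) :
    ∑ i ∈ Ioc a b, f i + ∑ i ∈ Ioc b c, f i = ∑ i ∈ Ioc a c, f i := by
  rw [← sum_union (Ioc_disjoint_Ioc_of_le le_rfl), Ioc_union_Ioc_eq_Ioc hab hbc]

namespace Int

theorem Ioc_eq_singleton {a b : ℤ} (h : b = a + 1) : Ioc a b = {b} := by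
  ext i
  simp only [mem_Ioc, mem_singleton]
  omega

theorem sum_Ioc_sub {G : Type*} [AddCommGroup G] (f : ℤ → G) {a b : ℤ} (hab : a ≤ b) :
    ∑ i ∈ Ioc a b, (f i - f (i - 1)) = f b - f a := by
  induction b, hab using Int.leInduction with
  | base => simp
  | succ b hab ih =>
    rw [← sum_Ioc_add_sum_Ioc _ hab (by omega), ih, Ioc_eq_singleton rfl, sum_singleton,
      add_sub_cancel_right]
    abel

end Int

section LinearRecurrence

variable {R : Type*} [CommRing R] {s : R} {F : ℤ → R}

theorem mul_eq_sub_of_rec (hrec : ∀ n : ℤ, F (n + 2) = s * F (n + 1) + F n) (n : ℤ) :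
    s * F n = F (n + 1) - F (n - 1) := by
  have h := hrec (n - 1)
  rw [show n - 1 + 2 = n + 1 by ring, sub_add_cancel] at h
  rw [h]
  ring

theorem sum_Ioc_mul_of_rec (hrec : ∀ n : ℤ, F (n + 2) = s * F (n + 1) + F n) (c : ℤ)
    {a b : ℤ} (hab : a ≤ b) :
    ∑ i ∈ Ioc a b, s * F (i - c) = F (b - c + 1) + F (b - c) - (F (a - c + 1) + F (a - c)) := by
  rw [← Int.sum_Ioc_sub (fun i ↦ F (i - c + 1) + F (i - c)) hab]
  refine sum_congr rfl fun i _ ↦ ?_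
  rw [mul_eq_sub_of_rec hrec, show i - 1 - c + 1 = i - c by ring,
    show i - 1 - c = i - c - 1 by ring]
  ring

theorem neg_natCast_of_rec (hrec : ∀ n : ℤ, F (n + 2) = s * F (n + 1) + F n) (h0 : F 0 = 0)
    (n : ℕ) : F (-n) = (-1) ^ (n + 1) * F n := by
  induction n using Nat.twoStepInduction with
  | zero => simp [h0]
  | one => simpa [h0] using (hrec (-1)).symm
  | more n ih₀ ih₁ =>
    have h := hrec (-(n + 2 : ℕ))
    have h' := hrec n
    push_cast at h h' ih₁ ⊢
    rw [show -((n : ℤ) + 2) + 2 = -n by ring, show -((n : ℤ) + 2) + 1 = -(n + 1) by ring,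
      ih₀, ih₁] at h
    rw [h']
    linear_combination -h

theorem neg_of_rec_of_even (hrec : ∀ n : ℤ, F (n + 2) = s * F (n + 1) + F n) (h0 : F 0 = 0)
    {n : ℤ} (hn : Even n) : F (-n) = -F n := by
  obtain ⟨k, rfl | rfl⟩ := n.eq_nat_or_neg
  · rw [neg_natCast_of_rec hrec h0, (Int.even_coe_nat k |>.mp hn).add_one.neg_one_pow]
    ring
  · rw [neg_neg, neg_natCast_of_rec hrec h0,
      (Int.even_coe_nat k |>.mp (even_neg.mp hn)).add_one.neg_one_pow]
    ring

theorem neg_of_rec_of_odd (hrec : ∀ n : ℤ, F (n + 2) = s * F (n + 1) + F n) (h0 : F 0 = 0)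
    {n : ℤ} (hn : Odd n) : F (-n) = F n := by
  obtain ⟨k, rfl | rfl⟩ := n.eq_nat_or_neg
  · rw [neg_natCast_of_rec hrec h0, (Int.odd_coe_nat k |>.mp hn).add_one.neg_one_pow]
    ring
  · rw [neg_neg, neg_natCast_of_rec hrec h0,
      (Int.odd_coe_nat k |>.mp (odd_neg.mp hn)).add_one.neg_one_pow]
    ring

end LinearRecurrence

theorem huffman_sum_eq (s : ℝ) (F : ℤ → ℝ)
    (h0 : F 0 = 0) (h1 : F 1 = 1)
    (hrec : ∀ n : ℤ, F (n + 2) = s * F (n + 1) + F n)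
    (M : ℤ) (hM2 : 2 ≤ M) (hMeven : Even M)
    (H : ℤ → ℝ)
    (hH : ∀ i : ℤ, H i =
      if i = 1 then 1
      else if 2 ≤ i ∧ i ≤ M + 1 then 2 * s * F (i - 1)
      else if i = M + 2 then s * F (M + 1) - 2 * F M
      else if M + 3 ≤ i ∧ i ≤ 2 * M + 2 then 2 * s * F (i - (2 * M + 3))
      else if i = 2 * M + 3 then -1
      else 0) :
    ∑ i ∈ Finset.Icc (1 : ℤ) (2 * M + 3), H i = F (M + 2) + F M := by
  have hsplit : ∑ i ∈ Icc 1 (2 * M + 3), H i = H 1 + ∑ i ∈ Ioc 1 (M + 1), H i + H (M + 2)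
      + ∑ i ∈ Ioc (M + 2) (2 * M + 2), H i + H (2 * M + 3) := by
    rw [Icc_eq_cons_Ioc (by omega), sum_cons,
      ← sum_Ioc_add_sum_Ioc H (b := 2 * M + 2) (by omega) (by omega),
      ← sum_Ioc_add_sum_Ioc H (b := M + 2) (by omega) (by omega),
      ← sum_Ioc_add_sum_Ioc H (b := M + 1) (by omega) (by omega),
      Int.Ioc_eq_singleton (a := M + 1) (by ring),
      Int.Ioc_eq_singleton (a := 2 * M + 2) (by ring), sum_singleton, sum_singleton]
    ring
  have hfirst : ∑ i ∈ Ioc 1 (M + 1), H i = 2 * (F (M + 1) + F M - 1) := by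
    have hterm : ∀ i ∈ Ioc 1 (M + 1), H i = 2 * (s * F (i - 1)) := fun i hi ↦ by
      rw [mem_Ioc] at hi
      rw [hH, if_neg (by omega), if_pos (by omega), mul_assoc]
    rw [sum_congr rfl hterm, ← mul_sum, sum_Ioc_mul_of_rec hrec 1 (by omega), sub_self,
      zero_add, add_sub_cancel_right, h0, h1]
    ring
  have hsecond : ∑ i ∈ Ioc (M + 2) (2 * M + 2), H i = 2 * (1 + F M - F (M + 1)) := by
    have hterm : ∀ i ∈ Ioc (M + 2) (2 * M + 2), H i = 2 * (s * F (i - (2 * M + 3))) :=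
      fun i hi ↦ by
        rw [mem_Ioc] at hi
        rw [hH, if_neg (by omega), if_neg (by omega), if_neg (by omega), if_pos (by omega),
          mul_assoc]
    rw [sum_congr rfl hterm, ← mul_sum, sum_Ioc_mul_of_rec hrec _ (by omega),
      show 2 * M + 2 - (2 * M + 3) = -1 by ring, show M + 2 - (2 * M + 3) + 1 = -M by ring,
      show M + 2 - (2 * M + 3) = -(M + 1) by ring, neg_add_cancel, h0,
      neg_of_rec_of_odd hrec h0 odd_one, neg_of_rec_of_even hrec h0 hMeven,
      neg_of_rec_of_odd hrec h0 hMeven.add_one, h1]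
    ring
  have hH1 : H 1 = 1 := by simp [hH]
  have hHmid : H (M + 2) = s * F (M + 1) - 2 * F M := by
    rw [hH, if_neg (by omega), if_neg (by omega), if_pos rfl]
  have hHlast : H (2 * M + 3) = -1 := by
    rw [hH, if_neg (by omega), if_neg (by omega), if_neg (by omega), if_neg (by omega),
      if_pos rfl]
  rw [hsplit, hfirst, hsecond, hH1, hHmid, hHlast, hrec M]
  ring
end

section
/- For even M ≥ 2 and real s ≠ 0, the auto-correlation peak of the Huffman sequence H^N(s) satisfies A_0(s) = ∑_{i=1}^{N} (H_i^N(s))² = 2 + s²·F_{M+1}(s)² + 4·F_M(s)·F_{M+2}(s), where N = 2M+3. -/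
/-!
Pairing the entry `H (k + 1)` with its mirror image `H (2M + 3 - k)` gives
`4 s² (F k² + F (-k)²) = 8 s² F k²`, because `F (-k) = ±F k`. The squares telescope,
`s ∑_{k=1}^{n} F k² = F n F (n + 1)`, since `s F (n + 1)² = F (n + 1) (F (n + 2) - F n)`.
Adding the three remaining entries `1`, `s F (M + 1) - 2 F M`, `-1` and substituting
`F (M + 2) = s F (M + 1) + F M` gives the closed form.
-/

open Finset

namespace Int

variable {M : Type*} [AddCommMonoid M]

theorem sum_Icc_add_sum_Icc (f : ℤ → M) {a b c : ℤ} (hab : a ≤ b + 1) (hbc : b ≤ c) :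
    ∑ i ∈ Icc a b, f i + ∑ i ∈ Icc (b + 1) c, f i = ∑ i ∈ Icc a c, f i := by
  simp only [← Finset.Ico_add_one_right_eq_Icc]
  rw [← sum_union (Ico_disjoint_Ico_consecutive _ _ _), Ico_union_Ico_eq_Ico hab (by omega)]

theorem sum_Icc_one_two_mul_add_three (f : ℤ → M) {n : ℤ} (hn : 0 ≤ n) :
    ∑ i ∈ Icc 1 (2 * n + 3), f i =
      f 1 + f (n + 2) + f (2 * n + 3) + ∑ k ∈ Icc 1 n, (f (k + 1) + f (2 * n + 3 - k)) := by
  have hshift : ∑ k ∈ Icc 1 n, f (k + 1) = ∑ i ∈ Icc 2 (n + 1), f i :=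
    sum_nbij' (· + 1) (· - 1)
      (fun k hk ↦ by simp only [mem_Icc] at hk ⊢; omega)
      (fun i hi ↦ by simp only [mem_Icc] at hi ⊢; omega)
      (by simp) (by simp) (by simp)
  have hreflect : ∑ k ∈ Icc 1 n, f (2 * n + 3 - k) = ∑ i ∈ Icc (n + 3) (2 * n + 2), f i :=
    sum_nbij' (2 * n + 3 - ·) (2 * n + 3 - ·)
      (fun k hk ↦ by simp only [mem_Icc] at hk ⊢; omega)
      (fun i hi ↦ by simp only [mem_Icc] at hi ⊢; omega)
      (by simp) (by simp) (by simp)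
  rw [sum_add_distrib, hshift, hreflect,
    ← sum_Icc_add_sum_Icc f (b := 2 * n + 2) (by omega) (by omega),
    ← sum_Icc_add_sum_Icc f (b := n + 2) (by omega) (by omega),
    ← sum_Icc_add_sum_Icc f (b := n + 1) (by omega) (by omega),
    ← sum_Icc_add_sum_Icc f (b := 1) (by omega) (by omega)]
  simp only [Icc_self, sum_singleton, show (1 : ℤ) + 1 = 2 by norm_num,
    show n + 1 + 1 = n + 2 by ring, show n + 2 + 1 = n + 3 by ring,
    show 2 * n + 2 + 1 = 2 * n + 3 by ring]
  abel

end Int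

section FibonacciRecurrence

variable {R : Type*} [CommRing R] {s : R} {F : ℤ → R}

theorem fib_rec_apply_neg_natCast (h0 : F 0 = 0) (hrec : ∀ n, F (n + 2) = s * F (n + 1) + F n)
    (n : ℕ) : F (-n) = (-1) ^ (n + 1) * F n := by
  induction n using Nat.twoStepInduction with
  | zero => simp [h0]
  | one => simpa [h0] using (hrec (-1)).symm
  | more n ih₀ ih₁ =>
    have h := hrec (-(n + 2 : ℤ))
    have h' := hrec n
    push_cast at ih₁ ⊢
    rw [show -((n : ℤ) + 2) + 2 = -n by ring, show -((n : ℤ) + 2) + 1 = -(n + 1) by ring] at h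
    linear_combination (-1) * h + ih₀ - s * ih₁ + (-1) ^ n * h'

theorem fib_rec_sq_apply_neg (h0 : F 0 = 0) (hrec : ∀ n, F (n + 2) = s * F (n + 1) + F n)
    (n : ℤ) : F (-n) ^ 2 = F n ^ 2 := by
  have hnat (k : ℕ) : F (-k) ^ 2 = F k ^ 2 := by
    rw [fib_rec_apply_neg_natCast h0 hrec, mul_pow, ← pow_mul, pow_mul', neg_one_sq, one_pow,
      one_mul]
  obtain ⟨k, rfl | rfl⟩ := n.eq_nat_or_neg
  · exact hnat k
  · rw [neg_neg]
    exact (hnat k).symm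

theorem fib_rec_mul_sum_Icc_sq (h0 : F 0 = 0) (hrec : ∀ n, F (n + 2) = s * F (n + 1) + F n)
    {n : ℤ} (hn : 0 ≤ n) : s * ∑ k ∈ Icc 1 n, F k ^ 2 = F n * F (n + 1) := by
  induction n, hn using Int.leInduction with
  | base => simp [h0]
  | succ n hn ih =>
    rw [← insert_Icc_right_eq_Icc_add_one (by omega), sum_insert (by simp), mul_add, ih,
      add_assoc, one_add_one_eq_two, hrec]
    ring

end FibonacciRecurrence

theorem huffman_autocorrelation_peak_general (s : ℝ) (F : ℤ → ℝ)
    (h0 : F 0 = 0)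
    (hrec : ∀ n : ℤ, F (n + 2) = s * F (n + 1) + F n)
    (M : ℤ) (hM2 : 2 ≤ M)
    (H : ℤ → ℝ)
    (hH : ∀ i : ℤ, H i =
      if i = 1 then 1
      else if 2 ≤ i ∧ i ≤ M + 1 then 2 * s * F (i - 1)
      else if i = M + 2 then s * F (M + 1) - 2 * F M
      else if M + 3 ≤ i ∧ i ≤ 2 * M + 2 then 2 * s * F (i - (2 * M + 3))
      else if i = 2 * M + 3 then -1
      else 0) :
    ∑ i ∈ Finset.Icc (1 : ℤ) (2 * M + 3), (H i) ^ 2 =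
      2 + s ^ 2 * (F (M + 1)) ^ 2 + 4 * F M * F (M + 2) := by
  have hM : 0 ≤ M := by omega
  have hfirst : H 1 = 1 := by simp [hH]
  have hmiddle : H (M + 2) = s * F (M + 1) - 2 * F M := by
    rw [hH, if_neg (by omega), if_neg (by omega), if_pos rfl]
  have hlast : H (2 * M + 3) = -1 := by
    rw [hH, if_neg (by omega), if_neg (by omega), if_neg (by omega), if_neg (by omega), if_pos rfl]
  have hpair : ∀ k ∈ Icc 1 M, H (k + 1) ^ 2 + H (2 * M + 3 - k) ^ 2 = 8 * s ^ 2 * F k ^ 2 := by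
    intro k hk
    rw [mem_Icc] at hk
    rw [hH, if_neg (by omega), if_pos (by omega), hH (2 * M + 3 - k), if_neg (by omega),
      if_neg (by omega), if_neg (by omega), if_pos (by omega), add_sub_cancel_right,
      show 2 * M + 3 - k - (2 * M + 3) = -k by ring]
    linear_combination 4 * s ^ 2 * fib_rec_sq_apply_neg h0 hrec k
  rw [Int.sum_Icc_one_two_mul_add_three _ hM, sum_congr rfl hpair, ← mul_sum, hfirst, hmiddle,
    hlast, hrec M]
  linear_combination 8 * s * fib_rec_mul_sum_Icc_sq h0 hrec hM

theorem huffman_autocorrelation_peak (s : ℝ) (hs : s ≠ 0) (F : ℤ → ℝ)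
    (h0 : F 0 = 0) (h1 : F 1 = 1)
    (hrec : ∀ n : ℤ, F (n + 2) = s * F (n + 1) + F n)
    (M : ℤ) (hM2 : 2 ≤ M) (hMeven : Even M)
    (H : ℤ → ℝ)
    (hH : ∀ i : ℤ, H i =
      if i = 1 then 1
      else if 2 ≤ i ∧ i ≤ M + 1 then 2 * s * F (i - 1)
      else if i = M + 2 then s * F (M + 1) - 2 * F M
      else if M + 3 ≤ i ∧ i ≤ 2 * M + 2 then 2 * s * F (i - (2 * M + 3))
      else if i = 2 * M + 3 then -1
      else 0) :
    ∑ i ∈ Finset.Icc (1 : ℤ) (2 * M + 3), (H i) ^ 2 =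
      2 + s ^ 2 * (F (M + 1)) ^ 2 + 4 * F M * F (M + 2) :=
  huffman_autocorrelation_peak_general s F h0 hrec M hM2 H hH
end

section
/- For even M ≥ 2, even shift d with 0 < d < M, writing r = d/2, the auto-correlation element A_d(s) of H^N(s) can be written in closed form as A_d(s) = 8s²·[F_{2r}(s)/(2s) + (s·F_{M+1}(s) − 2F_M(s))·F_{M−2r+1}(s)/(2s) − F_{M−r+1}(s)²/2 + F_{M−r}(s)·F_{M−r+1}(s)/s − F_r(s)²], and this expression equals zero for all real s ≠ 0. -/
/-!
Write `L n = F (n + 1) + F (n - 1)` for the Lucas companion of `F`. The key tool is the product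
formula `(s² + 4) F m F n = L (m + n) - (-1) ^ n L (m - n)`: both sides satisfy the Fibonacci
recurrence in `n` and agree at `n = 0, 1`.

Since `F (-n) = (-1) ^ (n + 1) F n`, the sequence satisfies `H (2M + 4 - i) = (-1) ^ i H i`, so for
even `d = 2r` the pairs `(i, i + d)` in the right half of `H` mirror those in the left half. The
left-half pairs contribute `∑ F k F (k + d)`, which telescopes to `F (M - d) F (M + 1) / s`; the
pairs straddling the centre form an alternating sum that the product formula turns into a
telescoping sum of Lucas terms. After multiplying by `s (s² + 4)`, both the correlation and the
closed form become combinations of product-formula instances that cancel by the Lucas recurrence.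
-/

open Finset

theorem Int.sum_Icc_consecutive {M : Type*} [AddCommMonoid M] (f : ℤ → M) {a b c : ℤ}
    (hab : a ≤ b + 1) (hbc : b ≤ c) :
    ∑ i ∈ Icc a c, f i = ∑ i ∈ Icc a b, f i + ∑ i ∈ Icc (b + 1) c, f i := by
  rw [← sum_union (disjoint_left.2 fun i hi hi' => by simp only [mem_Icc] at hi hi'; omega)]
  congr 1
  ext i
  simp only [mem_union, mem_Icc]
  omega

theorem Int.sum_Icc_succ_top {M : Type*} [AddCommMonoid M] (f : ℤ → M) {a b : ℤ}
    (hab : a ≤ b + 1) : ∑ i ∈ Icc a (b + 1), f i = ∑ i ∈ Icc a b, f i + f (b + 1) := by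
  rw [Int.sum_Icc_consecutive f hab (by omega), Icc_self, sum_singleton]

theorem Int.sum_Icc_add' {M : Type*} [AddCommMonoid M] (f : ℤ → M) (a b c : ℤ) :
    ∑ i ∈ Icc a b, f (i + c) = ∑ i ∈ Icc (a + c) (b + c), f i := by
  rw [← map_add_right_Icc, sum_map]
  rfl

variable {K : Type*} [Field K]

theorem neg_one_zpow_add_one (n : ℤ) : (-1 : K) ^ (n + 1) = -(-1) ^ n := by
  rw [zpow_add_one₀ (by norm_num)]
  ring

theorem neg_one_zpow_mul_self (n : ℤ) : (-1 : K) ^ n * (-1) ^ n = 1 := by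
  rw [← mul_zpow]
  norm_num

theorem neg_one_zpow_mul_zpow_sub (i k : ℤ) : (-1 : K) ^ i * (-1) ^ (k - i) = (-1) ^ k := by
  rw [← zpow_add₀ (by norm_num), add_sub_cancel]

theorem sum_Icc_neg_one_zpow (r : ℤ) (hr : 1 ≤ r) :
    ∑ j ∈ Icc 1 (2 * r - 1), (-1 : K) ^ j = -1 := by
  induction r, hr using Int.leInduction with
  | base => norm_num
  | succ r hr ih =>
    rw [show 2 * (r + 1) - 1 = 2 * r - 1 + 1 + 1 by ring, Int.sum_Icc_succ_top _ (by omega),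
      Int.sum_Icc_succ_top _ (by omega), ih, neg_one_zpow_add_one (2 * r - 1 + 1)]
    ring

theorem sum_Icc_mul_add_reflect {H : ℤ → K} {c d : ℤ} (hH : ∀ i, H (c - i) = (-1) ^ i * H i)
    (hd : Even d) (a b : ℤ) :
    ∑ i ∈ Icc a b, H i * H (i + d) =
      ∑ i ∈ Icc (c - d - b) (c - d - a), H i * H (i + d) := by
  refine sum_nbij' (fun i => c - d - i) (fun i => c - d - i) (fun i hi => ?_) (fun i hi => ?_)
    (fun i _ => by ring) (fun i _ => by ring) (fun i _ => ?_)
  · simp only [mem_Icc] at hi ⊢; omega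
  · simp only [mem_Icc] at hi ⊢; omega
  · rw [show c - d - i = c - (d + i) by ring, show c - (d + i) + d = c - i by ring, hH, hH,
      zpow_add₀ (by norm_num), hd.neg_one_zpow, add_comm d]
    linear_combination -H i * H (i + d) * neg_one_zpow_mul_self (K := K) i

def IsFibonacciLike (s : K) (f : ℤ → K) : Prop := ∀ n, f (n + 2) = s * f (n + 1) + f n

namespace IsFibonacciLike

variable {s : K} {f g : ℤ → K}

theorem apply_add_one (hf : IsFibonacciLike s f) (n : ℤ) : f (n + 1) = s * f n + f (n - 1) := by
  simpa [show n - 1 + 2 = n + 1 by ring] using hf (n - 1)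

theorem apply_sub_one (hf : IsFibonacciLike s f) (n : ℤ) : f (n - 1) = f (n + 1) - s * f n := by
  rw [hf.apply_add_one]
  ring

theorem sub (hf : IsFibonacciLike s f) (hg : IsFibonacciLike s g) :
    IsFibonacciLike s fun n => f n - g n := fun n => by
  dsimp only
  rw [hf, hg]
  ring

theorem const_mul (hf : IsFibonacciLike s f) (c : K) : IsFibonacciLike s fun n => c * f n :=
  fun n => by
    dsimp only
    rw [hf]
    ring

theorem comp_add_left (hf : IsFibonacciLike s f) (k : ℤ) :
    IsFibonacciLike s fun n => f (k + n) :=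
  fun n => by simpa only [add_assoc] using hf (k + n)

theorem neg_one_zpow_mul_comp_sub (hf : IsFibonacciLike s f) (k : ℤ) :
    IsFibonacciLike s fun n => (-1) ^ n * f (k - n) := fun n => by
  have h := hf.apply_sub_one (k - n - 1)
  rw [show k - n - 1 - 1 = k - (n + 2) by ring, show k - n - 1 + 1 = k - n by ring] at h
  dsimp only
  rw [h, show n + 2 = n + 1 + 1 by ring, neg_one_zpow_add_one, neg_one_zpow_add_one,
    show k - (n + 1) = k - n - 1 by ring]
  ring

theorem ext (hf : IsFibonacciLike s f) (hg : IsFibonacciLike s g) (h0 : f 0 = g 0)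
    (h1 : f 1 = g 1) : f = g := by
  have key : ∀ n, f n = g n ∧ f (n + 1) = g (n + 1) := by
    intro n
    induction n using Int.induction_on with
    | zero => exact ⟨h0, by simpa using h1⟩
    | succ n ih => exact ⟨ih.2, by rw [add_assoc, one_add_one_eq_two, hf, hg, ih.1, ih.2]⟩
    | pred n ih =>
      refine ⟨?_, by simpa using ih.1⟩
      rw [hf.apply_sub_one, hg.apply_sub_one, ih.1, ih.2]
  exact funext fun n => (key n).1

theorem mul_sum_Icc (hf : IsFibonacciLike s f) (a c b : ℤ) (hab : a - 1 ≤ b) :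
    s * ∑ i ∈ Icc a b, f (2 * i + c) = f (2 * b + c + 1) - f (2 * a + c - 1) := by
  induction b, hab using Int.leInduction with
  | base =>
    rw [Icc_eq_empty (by omega), sum_empty, mul_zero,
      show 2 * (a - 1) + c + 1 = 2 * a + c - 1 by ring, sub_self]
  | succ b hb ih =>
    rw [Int.sum_Icc_succ_top _ (by omega), mul_add, ih]
    linear_combination (norm := ring_nf) -hf.apply_add_one (2 * (b + 1) + c)

end IsFibonacciLike

def lucas (F : ℤ → K) (n : ℤ) : K := F (n + 1) + F (n - 1)

theorem isFibonacciLike_lucas {s : K} {F : ℤ → K} (hF : IsFibonacciLike s F) :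
    IsFibonacciLike s (lucas F) := fun n => by
  simp only [lucas]
  linear_combination (norm := ring_nf) hF (n + 1) + hF (n - 1)

namespace IsFibonacciLike

variable {s : K} {F : ℤ → K}

theorem mul_sum_Icc_mul_add (hF : IsFibonacciLike s F) (h0 : F 0 = 0) (t m : ℤ) (hm : 0 ≤ m) :
    s * ∑ k ∈ Icc 1 (2 * m), F k * F (k + t) = F (2 * m) * F (2 * m + t + 1) := by
  induction m, hm using Int.leInduction with
  | base => simp [h0]
  | succ m hm ih =>
    rw [show 2 * (m + 1) = 2 * m + 1 + 1 by ring, Int.sum_Icc_succ_top _ (by omega),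
      Int.sum_Icc_succ_top _ (by omega), mul_add, mul_add, ih]
    linear_combination (norm := ring_nf) -F (2 * m + 2) * hF (2 * m + t + 1)
      - F (2 * m + t + 1) * hF (2 * m)

section Fibonacci

variable (hF : IsFibonacciLike s F) (h0 : F 0 = 0) (h1 : F 1 = 1)
include hF h0 h1

theorem apply_neg_one : F (-1) = 1 := by
  simpa [h0, h1] using hF.apply_sub_one 0

theorem apply_neg (n : ℤ) : F (-n) = -(-1) ^ n * F n := by
  have h := hF.ext ((hF.neg_one_zpow_mul_comp_sub 0).const_mul (-1))
    (by simp [h0]) (by simp [hF.apply_neg_one h0 h1, h1])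
  have hn := congrFun h n
  simp only [zero_sub] at hn
  linear_combination (-1) ^ n * hn - F (-n) * neg_one_zpow_mul_self (K := K) n

theorem lucas_zero : lucas F 0 = 2 := by
  rw [lucas, zero_add, zero_sub, h1, hF.apply_neg_one h0 h1]
  norm_num

theorem lucas_one : lucas F 1 = s := by
  simpa [lucas, h0, h1] using hF 0

theorem lucas_neg (n : ℤ) : lucas F (-n) = (-1) ^ n * lucas F n := by
  have h := neg_one_zpow_add_one (K := K) (n - 1)
  rw [sub_add_cancel] at h
  rw [lucas, lucas, show -n + 1 = -(n - 1) by ring, show -n - 1 = -(n + 1) by ring,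
    hF.apply_neg h0 h1, hF.apply_neg h0 h1, neg_one_zpow_add_one, h]
  ring

theorem mul_mul_eq_lucas (m n : ℤ) :
    (s ^ 2 + 4) * (F m * F n) = lucas F (m + n) - (-1) ^ n * lucas F (m - n) := by
  have h := (hF.const_mul ((s ^ 2 + 4) * F m)).ext
    (((isFibonacciLike_lucas hF).comp_add_left m).sub
      ((isFibonacciLike_lucas hF).neg_one_zpow_mul_comp_sub m))
    (by simp [h0]) (by
      simp only [h1, lucas]
      linear_combination (norm := ring_nf) -hF m - hF.apply_sub_one (m - 1)
        - s * hF.apply_add_one m)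
  simpa [mul_assoc] using congrFun h n

theorem mul_mul_sum_neg_one_zpow_mul (a r : ℤ) (ha : Odd a) (hr : 1 ≤ r) :
    s * (s ^ 2 + 4) * ∑ j ∈ Icc 1 (2 * r - 1), (-1) ^ j * (F (a + j) * F (a + 2 * r - j)) =
      2 * lucas F (2 * r - 1) - s * lucas F (2 * a + 2 * r) := by
  have hterm (j : ℤ) : (s ^ 2 + 4) * ((-1) ^ j * (F (a + j) * F (a + 2 * r - j))) =
      (-1) ^ j * lucas F (2 * a + 2 * r) + lucas F (2 * j - 2 * r) := by
    have hsign := (neg_one_zpow_mul_zpow_sub (K := K) j (a + 2 * r)).trans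
      (Odd.neg_one_zpow (by grind))
    rw [mul_left_comm, hF.mul_mul_eq_lucas h0 h1,
      show a + j + (a + 2 * r - j) = 2 * a + 2 * r by ring,
      show a + j - (a + 2 * r - j) = 2 * j - 2 * r by ring]
    linear_combination (-lucas F (2 * j - 2 * r)) * hsign
  have htel := (isFibonacciLike_lucas hF).mul_sum_Icc 1 (-(2 * r)) (2 * r - 1) (by omega)
  simp only [← sub_eq_add_neg] at htel
  rw [show 2 * (2 * r - 1) - 2 * r + 1 = 2 * r - 1 by ring,
    show 2 * 1 - 2 * r - 1 = -(2 * r - 1) by ring, hF.lucas_neg h0 h1,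
    Odd.neg_one_zpow (by grind)] at htel
  rw [mul_assoc, mul_sum, sum_congr rfl fun j _ => hterm j, sum_add_distrib, ← sum_mul,
    sum_Icc_neg_one_zpow r hr, mul_add, htel]
  ring

end Fibonacci

end IsFibonacciLike

/-- The `i`-th entry of `H^N(s)` for `N = 2M + 3`, counted from `i = 1`, and `0` outside `[1, N]`;
the entry `2s F_{-k}` sits at position `i = N - k`. -/
def huffman (s : K) (F : ℤ → K) (M i : ℤ) : K :=
  if i = 1 then 1
  else if 2 ≤ i ∧ i ≤ M + 1 then 2 * s * F (i - 1)
  else if i = M + 2 then s * F (M + 1) - 2 * F M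
  else if M + 3 ≤ i ∧ i ≤ 2 * M + 2 then 2 * s * F (i - (2 * M + 3))
  else if i = 2 * M + 3 then -1
  else 0

section huffman

variable {s : K} {F : ℤ → K} {M i r : ℤ}

theorem huffman_one : huffman s F M 1 = 1 := if_pos rfl

theorem huffman_of_le_of_le_add_one (h : 2 ≤ i) (h' : i ≤ M + 1) :
    huffman s F M i = 2 * s * F (i - 1) := by
  rw [huffman, if_neg (by omega), if_pos ⟨h, h'⟩]

theorem huffman_add_two (hM : 0 ≤ M) : huffman s F M (M + 2) = s * F (M + 1) - 2 * F M := by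
  rw [huffman, if_neg (by omega), if_neg (by omega), if_pos rfl]

theorem huffman_of_add_three_le_of_le (h : M + 3 ≤ i) (h' : i ≤ 2 * M + 2) :
    huffman s F M i = 2 * s * F (i - (2 * M + 3)) := by
  rw [huffman, if_neg (by omega), if_neg (by omega), if_neg (by omega), if_pos ⟨h, h'⟩]

theorem huffman_two_mul_add_three (hM : 0 ≤ M) : huffman s F M (2 * M + 3) = -1 := by
  rw [huffman, if_neg (by omega), if_neg (by omega), if_neg (by omega), if_neg (by omega),
    if_pos rfl]

theorem huffman_of_not_mem_Icc (hM : 0 ≤ M) (h : i ∉ Icc 1 (2 * M + 3)) :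
    huffman s F M i = 0 := by
  rw [mem_Icc] at h
  rw [huffman, if_neg (by omega), if_neg (by omega), if_neg (by omega), if_neg (by omega),
    if_neg (by omega)]

theorem sum_Icc_huffman_mul_add_of_le (hr : 1 ≤ r) (hrM : 2 * r ≤ M) :
    ∑ i ∈ Icc 1 (M - 2 * r + 2), huffman s F M i * huffman s F M (i + 2 * r) =
      2 * s * F (2 * r) + 4 * s ^ 2 * ∑ k ∈ Icc 1 (M - 2 * r), F k * F (k + 2 * r)
        + 2 * s * F (M - 2 * r + 1) * (s * F (M + 1) - 2 * F M) := by
  have hmid : ∑ i ∈ Icc (1 + 1) (M - 2 * r + 1), huffman s F M i * huffman s F M (i + 2 * r) =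
      4 * s ^ 2 * ∑ k ∈ Icc 1 (M - 2 * r), F k * F (k + 2 * r) := by
    rw [← Int.sum_Icc_add', mul_sum]
    refine sum_congr rfl fun k hk => ?_
    rw [mem_Icc] at hk
    rw [huffman_of_le_of_le_add_one (by omega) (by omega),
      huffman_of_le_of_le_add_one (by omega) (by omega), add_sub_cancel_right,
      show k + 1 + 2 * r - 1 = k + 2 * r by ring]
    ring
  rw [show M - 2 * r + 2 = M - 2 * r + 1 + 1 by ring, Int.sum_Icc_succ_top _ (by omega),
    Int.sum_Icc_consecutive _ (a := 1) (b := 1) (by omega) (by omega), hmid, Icc_self,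
    sum_singleton, huffman_one, huffman_of_le_of_le_add_one (by omega) (by omega),
    show M - 2 * r + 1 + 1 + 2 * r = M + 2 by ring, huffman_add_two (by omega),
    huffman_of_le_of_le_add_one (by omega) (by omega)]
  ring_nf

namespace IsFibonacciLike

variable (hF : IsFibonacciLike s F) (h0 : F 0 = 0) (h1 : F 1 = 1)
include hF h0 h1

theorem huffman_reflect (hM : Even M) (hM0 : 0 ≤ M) (i : ℤ) :
    huffman s F M (2 * M + 4 - i) = (-1) ^ i * huffman s F M i := by
  obtain hi | rfl | hi | rfl | hi | rfl | hi : i < 1 ∨ i = 1 ∨ (2 ≤ i ∧ i ≤ M + 1) ∨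
      i = M + 2 ∨ (M + 3 ≤ i ∧ i ≤ 2 * M + 2) ∨ i = 2 * M + 3 ∨ 2 * M + 3 < i := by
    omega
  · rw [huffman_of_not_mem_Icc hM0 (by simp only [mem_Icc]; omega),
      huffman_of_not_mem_Icc hM0 (by simp only [mem_Icc]; omega), mul_zero]
  · rw [show 2 * M + 4 - 1 = 2 * M + 3 by ring, huffman_two_mul_add_three hM0, huffman_one]
    norm_num
  · have hsign := neg_one_zpow_add_one (K := K) (i - 1)
    rw [sub_add_cancel] at hsign
    rw [huffman_of_add_three_le_of_le (by omega) (by omega),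
      huffman_of_le_of_le_add_one hi.1 hi.2, show 2 * M + 4 - i - (2 * M + 3) = -(i - 1) by ring,
      hF.apply_neg h0 h1, hsign]
    ring
  · rw [show 2 * M + 4 - (M + 2) = M + 2 by ring, (hM.add even_two).neg_one_zpow, one_mul]
  · have hsign := (neg_one_zpow_mul_zpow_sub (K := K) i (2 * M + 3)).trans
      (Odd.neg_one_zpow (by grind))
    rw [huffman_of_le_of_le_add_one (by omega) (by omega),
      huffman_of_add_three_le_of_le hi.1 hi.2,
      show i - (2 * M + 3) = -(2 * M + 4 - i - 1) by ring, hF.apply_neg h0 h1,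
      show 2 * M + 4 - i - 1 = 2 * M + 3 - i by ring]
    linear_combination 2 * s * F (2 * M + 3 - i) * hsign
  · rw [show 2 * M + 4 - (2 * M + 3) = 1 by ring, huffman_one, huffman_two_mul_add_three hM0,
      Odd.neg_one_zpow (by grind)]
    norm_num
  · rw [huffman_of_not_mem_Icc hM0 (by simp only [mem_Icc]; omega),
      huffman_of_not_mem_Icc hM0 (by simp only [mem_Icc]; omega), mul_zero]

theorem sum_Icc_huffman_mul_add_of_le_of_le (hM : Even M) (hrM : 2 * r ≤ M) :
    ∑ i ∈ Icc (M - 2 * r + 3) (M + 1), huffman s F M i * huffman s F M (i + 2 * r) =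
      4 * s ^ 2 * ∑ j ∈ Icc 1 (2 * r - 1),
        (-1) ^ j * (F (M - 2 * r + 1 + j) * F (M - 2 * r + 1 + 2 * r - j)) := by
  rw [show M - 2 * r + 3 = 1 + (M - 2 * r + 2) by ring,
    show M + 1 = 2 * r - 1 + (M - 2 * r + 2) by ring, ← Int.sum_Icc_add', mul_sum]
  refine sum_congr rfl fun j hj => ?_
  rw [mem_Icc] at hj
  have hsign := (neg_one_zpow_mul_zpow_sub (K := K) j (M + 1)).trans hM.add_one.neg_one_zpow
  rw [huffman_of_le_of_le_add_one (by omega) (by omega),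
    huffman_of_add_three_le_of_le (by omega) (by omega),
    show j + (M - 2 * r + 2) - 1 = M - 2 * r + 1 + j by ring,
    show j + (M - 2 * r + 2) + 2 * r - (2 * M + 3) = -(M + 1 - j) by ring, hF.apply_neg h0 h1,
    show M - 2 * r + 1 + 2 * r - j = M + 1 - j by ring]
  linear_combination 4 * s ^ 2 * F (M - 2 * r + 1 + j) * F (M + 1 - j) *
    ((-1) ^ (M + 1 - j) * neg_one_zpow_mul_self (K := K) j - (-1) ^ j * hsign)

theorem sum_huffman_mul_add (hM : Even M) (hr : 1 ≤ r) (hrM : 2 * r < M) :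
    ∑ i ∈ Icc 1 (2 * M + 3), huffman s F M i * huffman s F M (i + 2 * r) =
      2 * ∑ i ∈ Icc 1 (M - 2 * r + 2), huffman s F M i * huffman s F M (i + 2 * r)
        + ∑ i ∈ Icc (M - 2 * r + 3) (M + 1), huffman s F M i * huffman s F M (i + 2 * r) := by
  have htail : ∑ i ∈ Icc (2 * M + 3 - 2 * r + 1) (2 * M + 3),
      huffman s F M i * huffman s F M (i + 2 * r) = 0 :=
    sum_eq_zero fun i hi => by
      rw [mem_Icc] at hi
      rw [huffman_of_not_mem_Icc (i := i + 2 * r) (by omega) (by simp only [mem_Icc]; omega),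
        mul_zero]
  have hrefl := sum_Icc_mul_add_reflect (hF.huffman_reflect h0 h1 hM (by omega))
    (even_two_mul r) (M + 1 + 1) (2 * M + 3 - 2 * r)
  rw [show 2 * M + 4 - 2 * r - (2 * M + 3 - 2 * r) = 1 by ring,
    show 2 * M + 4 - 2 * r - (M + 1 + 1) = M - 2 * r + 2 by ring] at hrefl
  rw [Int.sum_Icc_consecutive _ (b := 2 * M + 3 - 2 * r) (by omega) (by omega), htail, add_zero,
    Int.sum_Icc_consecutive _ (b := M - 2 * r + 2) (by omega) (by omega),
    Int.sum_Icc_consecutive _ (a := M - 2 * r + 2 + 1) (b := M + 1) (by omega) (by omega), hrefl,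
    show M - 2 * r + 2 + 1 = M - 2 * r + 3 by ring]
  ring

theorem sum_huffman_mul_add_eq_zero (hs : s ≠ 0) (hs4 : s ^ 2 + 4 ≠ 0) (hM : Even M)
    (hr : 1 ≤ r) (hrM : 2 * r < M) :
    ∑ i ∈ Icc 1 (2 * M + 3), huffman s F M i * huffman s F M (i + 2 * r) = 0 := by
  obtain ⟨m, rfl⟩ := hM
  have hsum := hF.mul_sum_Icc_mul_add h0 (2 * r) (m - r) (by omega)
  rw [show 2 * (m - r) = m + m - 2 * r by ring] at hsum
  have halt := hF.mul_mul_sum_neg_one_zpow_mul h0 h1 (m + m - 2 * r + 1) r ⟨m - r, by ring⟩ hr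
  have prod₁ := hF.mul_mul_eq_lucas h0 h1 (m + m + 1) (m + m - 2 * r)
  have prod₂ := hF.mul_mul_eq_lucas h0 h1 (m + m + 1) (m + m - 2 * r + 1)
  have prod₃ := hF.mul_mul_eq_lucas h0 h1 (m + m) (m + m - 2 * r + 1)
  have prod₄ := hF.mul_mul_eq_lucas h0 h1 (2 * r) 1
  rw [Even.neg_one_zpow ⟨m - r, by ring⟩] at prod₁
  rw [Odd.neg_one_zpow ⟨m - r, by ring⟩] at prod₂ prod₃
  rw [zpow_one, h1] at prod₄
  have hL := (isFibonacciLike_lucas hF).apply_add_one (2 * r)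
  rw [hF.sum_huffman_mul_add h0 h1 ⟨m, rfl⟩ hr hrM, sum_Icc_huffman_mul_add_of_le hr hrM.le,
    hF.sum_Icc_huffman_mul_add_of_le_of_le h0 h1 ⟨m, rfl⟩ hrM.le]
  refine mul_left_cancel₀ (mul_ne_zero hs hs4) ?_
  linear_combination (norm := ring_nf) 8 * s ^ 2 * (s ^ 2 + 4) * hsum + 4 * s ^ 2 * halt
    + 4 * s ^ 2 * (prod₄ + 2 * prod₁ + s * prod₂ - 2 * prod₃) - 4 * s ^ 2 * hL

theorem huffman_closed_form_eq_zero (hs4 : s ^ 2 + 4 ≠ 0) (hM : Even M) (r : ℤ) :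
    F (2 * r) + (s * F (M + 1) - 2 * F M) * F (M - 2 * r + 1) - s * F (M - r + 1) ^ 2
      + 2 * F (M - r) * F (M - r + 1) - 2 * s * F r ^ 2 = 0 := by
  have hsign : (-1 : K) ^ (M - r + 1) = -(-1) ^ r := by
    rw [show M - r + 1 = M + 1 - r by ring,
      ← mul_right_inj' (zpow_ne_zero r (by norm_num : (-1 : K) ≠ 0)),
      neg_one_zpow_mul_zpow_sub, hM.add_one.neg_one_zpow, mul_neg, neg_one_zpow_mul_self]
  have prod₁ := hF.mul_mul_eq_lucas h0 h1 (2 * r) 1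
  have prod₂ := hF.mul_mul_eq_lucas h0 h1 (M + 1) (M - 2 * r + 1)
  have prod₃ := hF.mul_mul_eq_lucas h0 h1 M (M - 2 * r + 1)
  have prod₄ := hF.mul_mul_eq_lucas h0 h1 (M - r + 1) (M - r + 1)
  have prod₅ := hF.mul_mul_eq_lucas h0 h1 (M - r) (M - r + 1)
  have prod₆ := hF.mul_mul_eq_lucas h0 h1 r r
  have hodd : Odd (M - 2 * r + 1) := by grind
  rw [zpow_one, h1] at prod₁
  rw [hodd.neg_one_zpow] at prod₂ prod₃
  rw [hsign, sub_self, hF.lucas_zero h0 h1] at prod₄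
  rw [hsign, show M - r - (M - r + 1) = -1 by ring, hF.lucas_neg h0 h1, zpow_one,
    hF.lucas_one h0 h1] at prod₅
  rw [sub_self, hF.lucas_zero h0 h1] at prod₆
  have hL := (isFibonacciLike_lucas hF).apply_add_one (2 * r)
  refine mul_left_cancel₀ hs4 ?_
  linear_combination (norm := ring_nf)
    prod₁ + s * prod₂ - 2 * prod₃ - s * prod₄ + 2 * prod₅ - 2 * s * prod₆ + hL

end IsFibonacciLike

end huffman

theorem huffman_autocorrelation_closed_form_general (s : ℝ) (hs : s ≠ 0) (F : ℤ → ℝ)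
    (h0 : F 0 = 0) (h1 : F 1 = 1)
    (hrec : ∀ n : ℤ, F (n + 2) = s * F (n + 1) + F n)
    (M : ℤ) (hMeven : Even M)
    (H : ℤ → ℝ)
    (hH : ∀ i : ℤ, H i =
      if i = 1 then 1
      else if 2 ≤ i ∧ i ≤ M + 1 then 2 * s * F (i - 1)
      else if i = M + 2 then s * F (M + 1) - 2 * F M
      else if M + 3 ≤ i ∧ i ≤ 2 * M + 2 then 2 * s * F (i - (2 * M + 3))
      else if i = 2 * M + 3 then -1
      else 0)
    (d r : ℤ) (hd : d = 2 * r) (hd0 : 0 < d) (hdM : d < M) :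
    (∑ i ∈ Finset.Icc (1 : ℤ) (2 * M + 3), H i * H (i + d)) =
        8 * s ^ 2 * (F (2 * r) / (2 * s)
          + (s * F (M + 1) - 2 * F M) * F (M - 2 * r + 1) / (2 * s)
          - (F (M - r + 1)) ^ 2 / 2
          + F (M - r) * F (M - r + 1) / s
          - (F r) ^ 2) ∧
      (∑ i ∈ Finset.Icc (1 : ℤ) (2 * M + 3), H i * H (i + d)) = 0 := by
  subst hd
  obtain rfl : H = huffman s F M := funext hH
  have hF : IsFibonacciLike s F := hrec
  have hs4 : s ^ 2 + 4 ≠ 0 := by positivity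
  have hA := hF.sum_huffman_mul_add_eq_zero h0 h1 hs hs4 hMeven (by omega) hdM
  refine ⟨?_, hA⟩
  rw [hA]
  field_simp
  linear_combination -8 * s * hF.huffman_closed_form_eq_zero h0 h1 hs4 hMeven r

theorem huffman_autocorrelation_closed_form (s : ℝ) (hs : s ≠ 0) (F : ℤ → ℝ)
    (h0 : F 0 = 0) (h1 : F 1 = 1)
    (hrec : ∀ n : ℤ, F (n + 2) = s * F (n + 1) + F n)
    (M : ℤ) (hM2 : 2 ≤ M) (hMeven : Even M)
    (H : ℤ → ℝ)
    (hH : ∀ i : ℤ, H i =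
      if i = 1 then 1
      else if 2 ≤ i ∧ i ≤ M + 1 then 2 * s * F (i - 1)
      else if i = M + 2 then s * F (M + 1) - 2 * F M
      else if M + 3 ≤ i ∧ i ≤ 2 * M + 2 then 2 * s * F (i - (2 * M + 3))
      else if i = 2 * M + 3 then -1
      else 0)
    (d r : ℤ) (hd : d = 2 * r) (hd0 : 0 < d) (hdM : d < M) :
    (∑ i ∈ Finset.Icc (1 : ℤ) (2 * M + 3), H i * H (i + d)) =
        8 * s ^ 2 * (F (2 * r) / (2 * s)
          + (s * F (M + 1) - 2 * F M) * F (M - 2 * r + 1) / (2 * s)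
          - (F (M - r + 1)) ^ 2 / 2
          + F (M - r) * F (M - r + 1) / s
          - (F r) ^ 2) ∧
      (∑ i ∈ Finset.Icc (1 : ℤ) (2 * M + 3), H i * H (i + d)) = 0 :=
  huffman_autocorrelation_closed_form_general s hs F h0 h1 hrec M hMeven H hH d r hd hd0 hdM
end

section
/- The geometric family H_int^N(s) = [s, (s²−1)·s⁰, (s²−1)·s¹, …, (s²−1)·s^{N−3}, −s^{N−2}] of length N is canonically delta-correlated for every N ≥ 3 and every real s: its aperiodic auto-correlation satisfies A_0 = s² + s^{2(N−2)} + (s²−1)²·∑_{n=0}^{N−3} s^{2n}, A_{±(N−1)} = −s^{N−1}, and A_d = 0 for all 0 < |d| < N−1. -/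
lemma icc_split (N : ℤ) (hN : 3 ≤ N) (g : ℤ → ℝ) :
    ∑ i ∈ Finset.Icc 1 N, g i = g 1 + g N + ∑ i ∈ Finset.Icc 2 (N-1), g i := by
  have h1 : Finset.Icc (1:ℤ) N = insert 1 (insert N (Finset.Icc 2 (N-1))) := by
    ext x; simp only [Finset.mem_Icc, Finset.mem_insert]; omega
  rw [h1, Finset.sum_insert (by simp only [Finset.mem_Icc, Finset.mem_insert]; omega),
    Finset.sum_insert (by simp only [Finset.mem_Icc]; omega)]
  ring

lemma icc_reindex (m : ℕ) (g : ℤ → ℝ) :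
    ∑ i ∈ Finset.Icc (2:ℤ) ((m:ℤ)+1), g i = ∑ n ∈ Finset.range m, g ((n:ℤ)+2) := by
  induction m with
  | zero => simp
  | succ k ih =>
    have h1 : Finset.Icc (2:ℤ) ((k:ℤ)+1+1) = insert ((k:ℤ)+2) (Finset.Icc 2 ((k:ℤ)+1)) := by
      ext x; simp only [Finset.mem_Icc, Finset.mem_insert]; omega
    push_cast
    rw [h1, Finset.sum_insert (by simp only [Finset.mem_Icc]; omega), ih,
      Finset.sum_range_succ]
    ring

lemma geo (s : ℝ) (d : ℕ) (K : ℕ) :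
    (s^2 - 1) * ∑ k ∈ Finset.range K, s^(2*k+d) = s^(2*K+d) - s^d := by
  induction K with
  | zero => simp
  | succ k ih =>
    rw [Finset.sum_range_succ, mul_add, ih,
      show 2*(k+1)+d = (2*k+d)+2 by ring, pow_add]
    ring

lemma symm_sum (N : ℤ) (H : ℤ → ℝ) (hz : ∀ j, j < 1 ∨ N < j → H j = 0) (d : ℤ) (hd : 0 ≤ d) :
    ∑ i ∈ Finset.Icc 1 N, H i * H (i + -d) = ∑ i ∈ Finset.Icc 1 N, H i * H (i + d) := by
  have h1 : ∑ i ∈ Finset.Icc (1:ℤ) (N-d), H i * H (i + d) = ∑ i ∈ Finset.Icc 1 N, H i * H (i + d) := by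
    apply Finset.sum_subset (Finset.Icc_subset_Icc le_rfl (by omega))
    intro x hx hx'
    simp only [Finset.mem_Icc] at hx hx'
    rw [hz (x+d) (by omega), mul_zero]
  have h2 : ∑ i ∈ Finset.Icc (1+d) N, H i * H (i + -d) = ∑ i ∈ Finset.Icc 1 N, H i * H (i + -d) := by
    apply Finset.sum_subset (Finset.Icc_subset_Icc (by omega) le_rfl)
    intro x hx hx'
    simp only [Finset.mem_Icc] at hx hx'
    rw [hz (x + -d) (by omega), mul_zero]
  rw [← h1, ← h2]
  have h3 : Finset.Icc (1+d) N = Finset.map (addRightEmbedding d) (Finset.Icc 1 (N-d)) := by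
    rw [Finset.map_add_right_Icc]; congr 1; omega
  rw [h3, Finset.sum_map]
  apply Finset.sum_congr rfl
  intro x _
  simp only [addRightEmbedding_apply]
  rw [show x + d + -d = x by ring, mul_comm]

theorem geometric_huffman_canonical (N : ℕ) (hN : 3 ≤ N) (s : ℝ)
    (H : ℤ → ℝ)
    (hH : ∀ i : ℤ, H i =
      if i = 1 then s
      else if 2 ≤ i ∧ i ≤ (N : ℤ) - 1 then (s ^ 2 - 1) * s ^ (i - 2).toNat
      else if i = (N : ℤ) then -s ^ (N - 2)
      else 0)
    (A : ℤ → ℝ)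
    (hA : ∀ d : ℤ, A d = ∑ i ∈ Finset.Icc (1 : ℤ) (N : ℤ), H i * H (i + d)) :
    A 0 = s ^ 2 + s ^ (2 * (N - 2)) + (s ^ 2 - 1) ^ 2 * ∑ n ∈ Finset.range (N - 2), s ^ (2 * n) ∧
      A ((N : ℤ) - 1) = -s ^ (N - 1) ∧ A (-((N : ℤ) - 1)) = -s ^ (N - 1) ∧
      ∀ d : ℤ, 0 < |d| → |d| < (N : ℤ) - 1 → A d = 0 := by
  have hN3 : (3:ℤ) ≤ (N:ℤ) := by exact_mod_cast hN
  have hH1 : H 1 = s := by rw [hH]; simp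
  have hHN : H (N:ℤ) = -s ^ (N-2) := by
    rw [hH, if_neg (by omega), if_neg (by omega), if_pos rfl]
  have hHmid : ∀ i : ℤ, 2 ≤ i → i ≤ (N:ℤ)-1 → H i = (s^2-1) * s^((i-2).toNat) := by
    intro i h1 h2
    rw [hH, if_neg (by omega), if_pos ⟨h1, h2⟩]
  have hz : ∀ j : ℤ, j < 1 ∨ (N:ℤ) < j → H j = 0 := by
    intro j hj
    rw [hH, if_neg (by omega), if_neg (by omega), if_neg (by omega)]
  have hNm : Finset.Icc (2:ℤ) ((N:ℤ)-1) = Finset.Icc (2:ℤ) (((N-2:ℕ):ℤ)+1) := by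
    congr 1; omega
  -- Part 1 : A 0
  have partA0 : A 0 = s ^ 2 + s ^ (2 * (N - 2)) + (s ^ 2 - 1) ^ 2 * ∑ n ∈ Finset.range (N - 2), s ^ (2 * n) := by
    rw [hA 0, icc_split (N:ℤ) hN3]
    simp only [add_zero]
    rw [hH1, hHN, hNm, icc_reindex]
    have h5 : ∀ n ∈ Finset.range (N-2), H ((n:ℤ)+2) * H ((n:ℤ)+2) = (s^2-1)^2 * s^(2*n) := by
      intro n hn
      simp only [Finset.mem_range] at hn
      rw [hHmid ((n:ℤ)+2) (by omega) (by omega), show ((n:ℤ)+2-2).toNat = n by omega,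
        show 2*n = n+n by ring, pow_add]
      ring
    rw [Finset.sum_congr rfl h5, ← Finset.mul_sum,
      show 2*(N-2) = (N-2)+(N-2) by ring, pow_add]
    ring
  -- Part 2 : A (N-1)
  have partTop : A ((N:ℤ)-1) = -s^(N-1) := by
    rw [hA, icc_split (N:ℤ) hN3,
      show (1:ℤ) + ((N:ℤ)-1) = (N:ℤ) by ring, hH1, hHN,
      hz ((N:ℤ) + ((N:ℤ)-1)) (by omega), mul_zero,
      Finset.sum_eq_zero (fun i hi => by
        simp only [Finset.mem_Icc] at hi
        rw [hz (i + ((N:ℤ)-1)) (by omega), mul_zero]),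
      show N-1 = (N-2)+1 by omega, pow_succ]
    ring
  -- Part 3 : zero correlations for positive d
  have key : ∀ d : ℤ, 0 < d → d < (N:ℤ)-1 → A d = 0 := by
    intro d hd1 hd2
    have hdd : (d.toNat:ℤ) = d := Int.toNat_of_nonneg (by omega)
    set d' := d.toNat with hd'def
    have hd'1 : 1 ≤ d' := by omega
    have hd'2 : d' ≤ N - 2 := by omega
    set K := N - 2 - d' with hKdef
    have hKZ : ((K:ℕ):ℤ) = (N:ℤ) - 2 - d' := by omega
    rw [hA, icc_split (N:ℤ) hN3,
      hH1, hHmid (1+d) (by omega) (by omega), hz ((N:ℤ)+d) (by omega), mul_zero,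
      hNm, icc_reindex]
    have hsub : ∑ n ∈ Finset.range (K+1), H ((n:ℤ)+2) * H ((n:ℤ)+2+d)
        = ∑ n ∈ Finset.range (N-2), H ((n:ℤ)+2) * H ((n:ℤ)+2+d) := by
      apply Finset.sum_subset (Finset.range_subset_range.2 (by omega))
      intro x hx hx'
      simp only [Finset.mem_range] at hx hx'
      rw [hz ((x:ℤ)+2+d) (by omega), mul_zero]
    rw [← hsub, Finset.sum_range_succ,
      hHmid ((K:ℤ)+2) (by omega) (by omega),
      show ((K:ℤ)+2+d) = (N:ℤ) by omega, hHN]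
    have h5 : ∀ n ∈ Finset.range K, H ((n:ℤ)+2) * H ((n:ℤ)+2+d)
        = (s^2-1)^2 * s^(2*n+d') := by
      intro n hn
      simp only [Finset.mem_range] at hn
      rw [hHmid ((n:ℤ)+2) (by omega) (by omega), hHmid ((n:ℤ)+2+d) (by omega) (by omega),
        show ((n:ℤ)+2-2).toNat = n by omega,
        show ((n:ℤ)+2+d-2).toNat = n + d' by omega,
        show 2*n+d' = n+(n+d') by ring, pow_add, pow_add]
      ring
    rw [Finset.sum_congr rfl h5, ← Finset.mul_sum,
      show ((s:ℝ)^2-1)^2 = (s^2-1)*(s^2-1) by ring, mul_assoc, geo s d' K]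
    have e1 : s * s^(d'-1) = s^d' := by
      conv_rhs => rw [show d' = (d'-1)+1 by omega]
      rw [pow_succ]; ring
    have e2 : s^K * s^(N-2) = s^(2*K+d') := by
      rw [← pow_add]; congr 1; omega
    rw [show ((1:ℤ)+d-2).toNat = d'-1 by omega, show (((K:ℤ))+2-2).toNat = K by omega]
    linear_combination (s^2-1) * e1 - (s^2-1) * e2
  refine ⟨partA0, partTop, ?_, ?_⟩
  · rw [hA, symm_sum (N:ℤ) H hz ((N:ℤ)-1) (by omega), ← hA]
    exact partTop
  · intro d h1 h2
    rcases lt_trichotomy d 0 with h | h | h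
    · have habs : |d| = -d := abs_of_neg h
      rw [habs] at h1 h2
      rw [hA, show d = -(-d) by ring, symm_sum (N:ℤ) H hz (-d) (by omega), ← hA]
      exact key (-d) (by omega) (by omega)
    · simp [h] at h1
    · have habs : |d| = d := abs_of_pos h
      rw [habs] at h1 h2
      exact key d h1 h2
end
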